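/- arXiv:1502.01811 — 3 statements merged into one kernel-verified Lean document; each statement's English description precedes it below -/
import Mathlib

section
/- Let S and Y be independent nonnegative random variables where Y is exponentially distributed with rate λ > 0 and S has a distribution with unbounded support (i.e., P(S > s) > 0 for all s > 0). Then the product X = S·Y is heavy-tailed: for every θ > 0, limsup_{x→∞} e^{θx} P(X > x) = ∞. -/
/-!
Fix `θ > 0` and choose a level `s > 0` so large that `lam / s < θ`. On the event `{S > s}`, the
product exceeds `x` as soon as `Y > x / s`, so independence and the exponential tail of `Y` give
`P(S * Y > x) ≥ P(S > s) * exp (-lam * x / s)`. Since `P(S > s) > 0`, the weighted tail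
`exp (θ x) * P(S * Y > x)` is bounded below by a positive multiple of `exp ((θ - lam / s) x)`,
which tends to infinity.
-/

open MeasureTheory ProbabilityTheory Filter

lemma ProbabilityTheory.IndepFun.measure_gt_mul_measure_gt_le {Ω : Type*} [MeasurableSpace Ω]
    {P : Measure Ω} {S Y : Ω → ℝ} (hindep : IndepFun S Y P) {s t : ℝ} (hs : 0 ≤ s)
    (ht : 0 ≤ t) : P {ω | S ω > s} * P {ω | Y ω > t} ≤ P {ω | S ω * Y ω > s * t} := by
  calc P {ω | S ω > s} * P {ω | Y ω > t} = P (S ⁻¹' Set.Ioi s ∩ Y ⁻¹' Set.Ioi t) :=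
        (hindep.measure_inter_preimage_eq_mul _ _ measurableSet_Ioi measurableSet_Ioi).symm
    _ ≤ _ := measure_mono fun ω ⟨hSω, hYω⟩ => mul_lt_mul'' hSω hYω hs ht

lemma ENNReal.tendsto_const_mul_ofReal_exp_mul_atTop {c : ENNReal} (hc : c ≠ 0) {r : ℝ}
    (hr : 0 < r) :
    Tendsto (fun x : ℝ => c * ENNReal.ofReal (Real.exp (r * x))) atTop (nhds ⊤) := by
  have hexp : Tendsto (fun x : ℝ => ENNReal.ofReal (Real.exp (r * x))) atTop (nhds ⊤) :=
    ENNReal.tendsto_ofReal_atTop.comp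
      (Real.tendsto_exp_atTop.comp (tendsto_id.const_mul_atTop hr))
  simpa [ENNReal.mul_top hc] using
    ENNReal.Tendsto.const_mul (a := c) hexp (Or.inl ENNReal.top_ne_zero)

lemma ProbabilityTheory.IndepFun.measure_gt_mul_exp_le_measure_mul_gt {Ω : Type*}
    [MeasurableSpace Ω] {P : Measure Ω} {S Y : Ω → ℝ} (hindep : IndepFun S Y P) {lam : ℝ}
    (hYexp : ∀ y : ℝ, 0 ≤ y → P {ω | Y ω > y} = ENNReal.ofReal (Real.exp (-lam * y)))
    {s x : ℝ} (hs : 0 < s) (hx : 0 ≤ x) :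
    P {ω | S ω > s} * ENNReal.ofReal (Real.exp (-lam * (x / s))) ≤
      P {ω | S ω * Y ω > x} := by
  have hdiv : 0 ≤ x / s := div_nonneg hx hs.le
  simpa only [← hYexp _ hdiv, mul_div_cancel₀ x hs.ne'] using
    hindep.measure_gt_mul_measure_gt_le hs.le hdiv

theorem stmt0_general {Ω : Type*} [MeasurableSpace Ω] (P : Measure Ω)
    (S Y : Ω → ℝ) (hindep : IndepFun S Y P)
    (lam : ℝ)
    (hYexp : ∀ y : ℝ, 0 ≤ y → P {ω | Y ω > y} = ENNReal.ofReal (Real.exp (-lam * y)))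
    (hSunb : ∀ s : ℝ, 0 < s → 0 < P {ω | S ω > s}) :
    ∀ θ : ℝ, 0 < θ →
      Filter.limsup
        (fun x : ℝ => ENNReal.ofReal (Real.exp (θ * x)) * P {ω | S ω * Y ω > x})
        atTop = ⊤ := by
  intro θ hθ
  obtain ⟨s, hs, hrate⟩ : ∃ s : ℝ, 0 < s ∧ lam / s < θ :=
    (((tendsto_const_nhds.div_atTop tendsto_id).eventually (gt_mem_nhds hθ)).and
      (eventually_gt_atTop 0)).exists.imp fun _ h => h.symm
  have hlower : ∀ᶠ x in atTop,
      P {ω | S ω > s} * ENNReal.ofReal (Real.exp ((θ - lam / s) * x)) ≤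
        ENNReal.ofReal (Real.exp (θ * x)) * P {ω | S ω * Y ω > x} := by
    filter_upwards [eventually_ge_atTop 0] with x hx
    have hsplit :
        Real.exp ((θ - lam / s) * x) = Real.exp (θ * x) * Real.exp (-lam * (x / s)) := by
      rw [← Real.exp_add]; ring_nf
    rw [hsplit, ENNReal.ofReal_mul (Real.exp_nonneg _), mul_left_comm]
    exact mul_le_mul_right (hindep.measure_gt_mul_exp_le_measure_mul_gt hYexp hs hx) _
  refine top_le_iff.mp ?_
  calc ⊤ = limsup (fun x => P {ω | S ω > s} * ENNReal.ofReal (Real.exp ((θ - lam / s) * x)))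
        atTop :=
        ((ENNReal.tendsto_const_mul_ofReal_exp_mul_atTop (hSunb s hs).ne'
          (sub_pos.mpr hrate)).limsup_eq).symm
    _ ≤ _ := limsup_le_limsup hlower

/-- If `Y` is exponential with rate `lam > 0` and `S` (independent of `Y`) has a
distribution with unbounded support, then `X = S * Y` is heavy-tailed. -/
theorem stmt0 {Ω : Type*} [MeasurableSpace Ω] (P : Measure Ω) [IsProbabilityMeasure P]
    (S Y : Ω → ℝ) (hindep : IndepFun S Y P)
    (hS0 : ∀ᵐ ω ∂P, 0 ≤ S ω) (hY0 : ∀ᵐ ω ∂P, 0 ≤ Y ω)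
    (lam : ℝ) (hlam : 0 < lam)
    (hYexp : ∀ y : ℝ, 0 ≤ y → P {ω | Y ω > y} = ENNReal.ofReal (Real.exp (-lam * y)))
    (hSunb : ∀ s : ℝ, 0 < s → 0 < P {ω | S ω > s}) :
    ∀ θ : ℝ, 0 < θ →
      Filter.limsup
        (fun x : ℝ => ENNReal.ofReal (Real.exp (θ * x)) * P {ω | S ω * Y ω > x})
        atTop = ⊤ :=
  stmt0_general P S Y hindep lam hYexp hSunb
end

section
/- Zipf scaling asymptotics: for α ≥ 2 and λ > 0, let F̄(x) = (1/ζ(α)) ∑_{i=1}^∞ i^{-α} e^{-λx/i}. Then lim_{x→∞} x^{α-1} F̄(x) = Γ(α-1)/(ζ(α) λ^{α-1}); in particular F̄ is regularly varying with index -(α-1), so F belongs to the Fréchet maximum domain of attraction with index α - 1. -/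
/-!
Substituting `v = i / x` turns `x ^ (α - 1) * ∑ i ^ (-α) * exp (-λ x / i)` into the Riemann sum
`x⁻¹ * ∑ K (i / x)` of `K v = v ^ (-α) * exp (-λ / v)` with mesh `1 / x`, i.e. into the integral of
the step function `u ↦ K (⌈u x⌉ / x)`. As `x → ∞` these step functions converge pointwise to `K`,
and they are dominated by the integrable function `min (sup K) (u ^ (-α))` because
`⌈u x⌉ / x ≥ u`, so by dominated convergence the limit is `∫₀^∞ K = Γ(α - 1) / λ ^ (α - 1)`.
Regular variation follows by comparing the limits at `t x` and at `x`.
-/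

open Filter MeasureTheory Set Topology Real

section RiemannSum

variable {E : Type*} [NormedAddCommGroup E] [NormedSpace ℝ E] [CompleteSpace E]

theorem preimage_natCeil_singleton_add_one (n : ℕ) :
    (fun w : ℝ => ⌈w⌉₊) ⁻¹' {n + 1} = Ioc (n : ℝ) (n + 1) := by
  ext w
  simp [Nat.ceil_eq_iff (Nat.succ_ne_zero n)]

theorem setIntegral_Ioi_comp_natCeil {g : ℕ → E}
    (hg : IntegrableOn (fun w : ℝ => g ⌈w⌉₊) (Ioi 0)) :
    ∫ w in Ioi (0 : ℝ), g ⌈w⌉₊ = ∑' n : ℕ, g (n + 1) := by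
  have hunion : ⋃ n : ℕ, Ioc (n : ℝ) (n + 1) = Ioi 0 := by
    ext w
    simp only [← preimage_natCeil_singleton_add_one, mem_iUnion, mem_preimage,
      mem_singleton_iff, mem_Ioi]
    rw [← Nat.ceil_pos, ← Nat.exists_eq_add_one]
  have hdisj : Pairwise (Function.onFun Disjoint fun n : ℕ => Ioc (n : ℝ) (n + 1)) := by
    intro m n hmn
    simp only [Function.onFun, ← preimage_natCeil_singleton_add_one]
    exact (disjoint_singleton.2 (by omega)).preimage _
  rw [← hunion, integral_iUnion (fun _ => measurableSet_Ioc) hdisj (hunion ▸ hg)]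
  congr 1 with n
  rw [setIntegral_congr_fun measurableSet_Ioc (g := fun _ => g (n + 1)), setIntegral_const,
    Real.volume_real_Ioc_of_le (by linarith), add_sub_cancel_left, one_smul]
  intro w hw
  rw [← preimage_natCeil_singleton_add_one] at hw
  exact congrArg g hw

theorem setIntegral_Ioi_comp_natCeil_mul_div {f : ℝ → E} {x : ℝ} (hx : 0 < x)
    (hf : IntegrableOn (fun u => f (⌈u * x⌉₊ / x)) (Ioi 0)) :
    ∫ u in Ioi 0, f (⌈u * x⌉₊ / x) = x⁻¹ • ∑' n : ℕ, f ((n + 1) / x) := by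
  rw [integral_comp_mul_right_Ioi (fun w => f (⌈w⌉₊ / x)) 0 hx, zero_mul,
    setIntegral_Ioi_comp_natCeil (g := fun n => f (n / x))]
  · push_cast; rfl
  · simpa [zero_mul] using (integrableOn_Ioi_comp_mul_right_iff (fun w => f (⌈w⌉₊ / x)) 0 hx).1 hf

theorem tendsto_smul_tsum_atTop_setIntegral_Ioi {f : ℝ → E} {b : ℝ → ℝ}
    (hf : StronglyMeasurable f) (hfc : ContinuousOn f (Ioi 0)) (hb : IntegrableOn b (Ioi 0))
    (hfb : ∀ u v, 0 < u → u ≤ v → ‖f v‖ ≤ b u) :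
    Tendsto (fun x : ℝ => x⁻¹ • ∑' n : ℕ, f ((n + 1) / x)) atTop (𝓝 (∫ u in Ioi 0, f u)) := by
  have hmeas : ∀ x : ℝ, AEStronglyMeasurable (fun u : ℝ => f (⌈u * x⌉₊ / x))
      (volume.restrict (Ioi 0)) := fun x =>
    (hf.comp_measurable (by fun_prop)).aestronglyMeasurable
  have hbound : ∀ x : ℝ, 0 < x → ∀ u ∈ Ioi (0 : ℝ), ‖f (⌈u * x⌉₊ / x)‖ ≤ b u :=
    fun x hx u hu => hfb u _ hu ((le_div_iff₀ hx).2 (Nat.le_ceil _))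
  have hlim := tendsto_integral_filter_of_dominated_convergence b
    (Eventually.of_forall hmeas)
    ((eventually_gt_atTop 0).mono fun x hx => ae_restrict_of_forall_mem measurableSet_Ioi
      (hbound x hx)) hb
    (ae_restrict_of_forall_mem measurableSet_Ioi fun u hu =>
      (hfc.continuousAt (Ioi_mem_nhds hu)).tendsto.comp (tendsto_nat_ceil_mul_div_atTop hu.le))
  refine hlim.congr' ?_
  filter_upwards [eventually_gt_atTop 0] with x hx
  exact setIntegral_Ioi_comp_natCeil_mul_div hx
    (hb.mono' (hmeas x) (ae_restrict_of_forall_mem measurableSet_Ioi (hbound x hx)))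

end RiemannSum

-- `y ≤ exp (y - 1)` at `y = r w / a`; equality holds at `w = a / r`.
theorem Real.rpow_mul_exp_neg_mul_le {a r w : ℝ} (ha : 0 < a) (hr : 0 < r) (hw : 0 ≤ w) :
    w ^ a * exp (-(r * w)) ≤ (a / r) ^ a * exp (-a) := by
  have key : (r * w / a) ^ a ≤ exp (r * w - a) := by
    calc (r * w / a) ^ a ≤ exp (r * w / a - 1) ^ a := by
          gcongr
          linarith [add_one_le_exp (r * w / a - 1)]
      _ = exp (r * w - a) := by
          rw [← exp_mul]
          congr 1
          field_simp
  calc w ^ a * exp (-(r * w)) = (a / r) ^ a * ((r * w / a) ^ a * exp (-(r * w))) := by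
        rw [← mul_assoc, ← mul_rpow (by positivity) (by positivity)]
        congr 2
        field_simp
    _ ≤ (a / r) ^ a * (exp (r * w - a) * exp (-(r * w))) := by gcongr
    _ = (a / r) ^ a * exp (-a) := by rw [← exp_add]; ring_nf

theorem integrableOn_Ioi_min_rpow_neg {C s : ℝ} (hC : 0 ≤ C) (hs : 1 < s) :
    IntegrableOn (fun u : ℝ => min C (u ^ (-s))) (Ioi 0) := by
  have hmeas : AEStronglyMeasurable (fun u : ℝ => min C (u ^ (-s))) volume := by
    fun_prop
  rw [← Ioc_union_Ioi_eq_Ioi zero_le_one]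
  refine IntegrableOn.union ?_ ?_
  · refine (integrableOn_const (C := C) (by simp)).mono' hmeas.restrict
      (ae_restrict_of_forall_mem measurableSet_Ioc fun u hu => ?_)
    rw [Real.norm_of_nonneg (le_min hC (rpow_nonneg hu.1.le _))]
    exact min_le_left _ _
  · refine (integrableOn_Ioi_rpow_of_lt (by linarith : -s < -1) one_pos).mono' hmeas.restrict
      (ae_restrict_of_forall_mem measurableSet_Ioi fun u hu => ?_)
    rw [Real.norm_of_nonneg (le_min hC (rpow_nonneg (zero_le_one.trans hu.le) _))]
    exact min_le_right _ _

theorem tendsto_comp_mul_div_of_tendsto_rpow_mul {F : ℝ → ℝ} {ρ L t : ℝ} (hL : L ≠ 0)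
    (ht : 0 < t) (hF : Tendsto (fun x => x ^ ρ * F x) atTop (𝓝 L)) :
    Tendsto (fun x => F (t * x) / F x) atTop (𝓝 (t ^ (-ρ))) := by
  have hFt := hF.comp (tendsto_id.const_mul_atTop ht)
  have hratio := (hFt.div hF hL).const_mul (t ^ (-ρ))
  rw [div_self hL, mul_one] at hratio
  refine hratio.congr' ?_
  filter_upwards [eventually_gt_atTop 0, hF.eventually_ne hL] with x hx hFx
  have hFx' : F x ≠ 0 := right_ne_zero_of_mul hFx
  simp only [Pi.div_apply, Function.comp_apply, id, mul_rpow ht.le hx.le, rpow_neg ht.le]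
  field_simp

theorem tsum_add_one_rpow_neg_pos {s : ℝ} (hs : 1 < s) : 0 < ∑' i : ℕ, ((i : ℝ) + 1) ^ (-s) := by
  have hsum : Summable fun i : ℕ => ((i : ℝ) + 1) ^ (-s) := by
    exact_mod_cast (summable_nat_add_iff 1).2 (Real.summable_nat_rpow.2 (by linarith : -s < -1))
  exact hsum.tsum_pos (fun i => by positivity) 0 (by simp)

noncomputable def zipfKernel (α lam v : ℝ) : ℝ := v ^ (-α) * exp (-(lam / v))

section ZipfKernel

variable {α lam : ℝ}

theorem zipfKernel_nonneg {v : ℝ} (hv : 0 ≤ v) : 0 ≤ zipfKernel α lam v := by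
  unfold zipfKernel; positivity

theorem zipfKernel_le_rpow_neg (hlam : 0 ≤ lam) {v : ℝ} (hv : 0 ≤ v) :
    zipfKernel α lam v ≤ v ^ (-α) :=
  mul_le_of_le_one_right (rpow_nonneg hv _)
    (exp_le_one_iff.2 (neg_nonpos.2 (div_nonneg hlam hv)))

theorem zipfKernel_le (hα : 0 < α) (hlam : 0 < lam) {v : ℝ} (hv : 0 < v) :
    zipfKernel α lam v ≤ (α / lam) ^ α * exp (-α) := by
  rw [zipfKernel, rpow_neg hv.le, ← inv_rpow hv.le, div_eq_mul_inv]
  exact rpow_mul_exp_neg_mul_le hα hlam (inv_nonneg.2 hv.le)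

theorem continuousOn_zipfKernel : ContinuousOn (zipfKernel α lam) (Ioi 0) :=
  (continuousOn_id.rpow_const fun _ hv => Or.inl (ne_of_gt hv)).mul
    (continuousOn_const.div continuousOn_id fun _ hv => ne_of_gt hv).neg.rexp

theorem integral_zipfKernel (hα : 1 < α) (hlam : 0 < lam) :
    ∫ v in Ioi 0, zipfKernel α lam v = Gamma (α - 1) / lam ^ (α - 1) := by
  have hsubst := integral_comp_rpow_Ioi (fun y => y ^ (α - 1 - 1) * exp (-(lam * y)))
    (p := -1) (by norm_num)
  rw [integral_rpow_mul_exp_neg_mul_Ioi (by linarith) hlam, one_div, inv_rpow hlam.le,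
    inv_mul_eq_div] at hsubst
  rw [← hsubst]
  refine setIntegral_congr_fun measurableSet_Ioi fun v (hv : 0 < v) => ?_
  rw [smul_eq_mul, abs_neg, abs_one, one_mul, rpow_neg_one, inv_rpow hv.le,
    ← rpow_neg hv.le, ← mul_assoc, ← rpow_add hv, zipfKernel, div_eq_mul_inv]
  ring_nf

theorem smul_zipfKernel_div {x : ℝ} (hx : 0 < x) (i : ℝ) (hi : 0 < i) :
    x⁻¹ • zipfKernel α lam (i / x) = x ^ (α - 1) * (i ^ (-α) * exp (-lam * x / i)) := by
  rw [smul_eq_mul, zipfKernel, div_rpow hi.le hx.le, rpow_neg hx.le, rpow_sub_one hx.ne']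
  field_simp

theorem tendsto_rpow_mul_tsum_zipf (hα : 1 < α) (hlam : 0 < lam) :
    Tendsto (fun x : ℝ => x ^ (α - 1) *
        ∑' i : ℕ, ((i : ℝ) + 1) ^ (-α) * exp (-lam * x / ((i : ℝ) + 1))) atTop
      (𝓝 (Gamma (α - 1) / lam ^ (α - 1))) := by
  have hbound : ∀ u v : ℝ, 0 < u → u ≤ v →
      ‖zipfKernel α lam v‖ ≤ min ((α / lam) ^ α * exp (-α)) (u ^ (-α)) := by
    intro u v hu huv
    have hv := hu.trans_le huv
    rw [Real.norm_of_nonneg (zipfKernel_nonneg hv.le)]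
    exact le_min (zipfKernel_le (by linarith) hlam hv)
      ((zipfKernel_le_rpow_neg hlam.le hv.le).trans
        (rpow_le_rpow_of_nonpos hu huv (by linarith)))
  rw [← integral_zipfKernel hα hlam]
  refine (tendsto_smul_tsum_atTop_setIntegral_Ioi (by unfold zipfKernel; fun_prop)
    continuousOn_zipfKernel (integrableOn_Ioi_min_rpow_neg (by positivity) hα) hbound).congr' ?_
  filter_upwards [eventually_gt_atTop 0] with x hx
  rw [← tsum_const_smul'', ← tsum_mul_left]
  exact tsum_congr fun i => smul_zipfKernel_div hx _ (by positivity)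

end ZipfKernel

/-- Zipf scaling: the tail of the exponential mixture with Zipf(α) scaling is
asymptotically `Γ(α-1)/(ζ(α) λ^{α-1}) x^{-(α-1)}`; in particular it is regularly
varying with index `-(α-1)`, so the mixture lies in the Fréchet MDA of index `α-1`. -/
theorem stmt16 (α lam : ℝ) (hα : 2 ≤ α) (hlam : 0 < lam)
    (zeta : ℝ) (hzeta : zeta = ∑' i : ℕ, ((i : ℝ) + 1) ^ (-α))
    (Fbar : ℝ → ℝ)
    (hFbar : ∀ x : ℝ, Fbar x =
      (∑' i : ℕ, ((i : ℝ) + 1) ^ (-α) * Real.exp (-lam * x / ((i : ℝ) + 1))) / zeta) :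
    Filter.Tendsto (fun x : ℝ => x ^ (α - 1) * Fbar x) atTop
        (nhds (Real.Gamma (α - 1) / (zeta * lam ^ (α - 1)))) ∧
    (∀ t : ℝ, 0 < t →
      Filter.Tendsto (fun x : ℝ => Fbar (t * x) / Fbar x) atTop
        (nhds (t ^ (-(α - 1))))) := by
  have hα' : 1 < α := by linarith
  have hzeta_pos : 0 < zeta := hzeta ▸ tsum_add_one_rpow_neg_pos hα'
  have hlim : Tendsto (fun x : ℝ => x ^ (α - 1) * Fbar x) atTop
      (𝓝 (Gamma (α - 1) / (zeta * lam ^ (α - 1)))) := by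
    have := (tendsto_rpow_mul_tsum_zipf hα' hlam).div_const zeta
    simp only [hFbar, ← mul_div_assoc]
    rwa [div_div, mul_comm (lam ^ (α - 1))] at this
  exact ⟨hlim, fun t ht => tendsto_comp_mul_div_of_tendsto_rpow_mul
    (div_pos (Gamma_pos_of_pos (by linarith)) (by positivity)).ne' ht hlim⟩
end

section
/- Geometric scaling is heavy-tailed: let 0 < q < 1, λ > 0, p = 1 - q, and define F̄(x) = ∑_{i=1}^∞ p q^i e^{-λx/i} for x > 0. Then for every θ > 0, lim_{x→∞} e^{θx} F̄(x) = ∞; in fact F̄(x) = exp(-2√(λ|log q| x)(1 + o(1))) as x → ∞. -/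
/-!
Write `q ^ n = exp (-|log q| n)`, so that the `n`-th term of `F̄(x)` is
`(1 - q) exp (-(|log q| n + λx / n))`. By AM-GM the exponent is at least `2√(λ|log q| x)`, with
near-equality at an integer `n ≈ √(λx / |log q|)`; that single term gives
`F̄(x) ≥ (1 - q) q e^{-2√(λ|log q| x)}`, which already beats every `e^{-θx}`. For the upper bound,
keep a fraction `1 - κ²` of `|log q| n` as a convergent geometric factor and apply AM-GM to the
rest: `F̄(x) ≤ C_κ e^{-2κ√(λ|log q| x)}` for every `κ < 1`, and letting `κ → 1` squeezes
`log F̄(x) / (-2√(λ|log q| x))` to `1`.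
-/

open Filter Topology Real

theorem two_mul_sqrt_mul_le_mul_add_div {a c n : ℝ} (ha : 0 ≤ a) (hc : 0 ≤ c) (hn : 0 < n) :
    2 * √(a * c) ≤ a * n + c / n := by
  have hac : a * c = (a * n) * (c / n) := by field_simp
  rw [hac, sqrt_mul (by positivity)]
  nlinarith [sq_sqrt (by positivity : 0 ≤ a * n), sq_sqrt (by positivity : 0 ≤ c / n),
    sq_nonneg (√(a * n) - √(c / n))]

theorem exists_nat_mul_succ_add_div_succ_le {a c : ℝ} (ha : 0 < a) (hc : 0 < c) :
    ∃ i : ℕ, a * ((i : ℝ) + 1) + c / ((i : ℝ) + 1) ≤ 2 * √(a * c) + a := by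
  set t := √(a * c) / a
  have ht : 0 < t := by positivity
  have hat : a * t = √(a * c) := mul_div_cancel₀ _ ha.ne'
  have hct : c / t = √(a * c) := by
    rw [div_eq_iff ht.ne', ← hat]
    have := mul_self_sqrt (mul_pos ha hc).le
    rw [← hat] at this
    nlinarith
  obtain ⟨i, hi⟩ : ∃ i : ℕ, ⌈t⌉₊ = i + 1 := Nat.exists_eq_add_one.mpr (Nat.ceil_pos.mpr ht)
  have hle : t ≤ (i : ℝ) + 1 := by exact_mod_cast hi ▸ Nat.le_ceil t
  have hlt : (i : ℝ) + 1 < t + 1 := by exact_mod_cast hi ▸ Nat.ceil_lt_add_one ht.le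
  refine ⟨i, ?_⟩
  calc a * ((i : ℝ) + 1) + c / ((i : ℝ) + 1) ≤ a * (t + 1) + c / t := by
        gcongr
    _ = 2 * √(a * c) + a := by rw [mul_add, hat, hct]; ring

theorem pow_eq_exp_neg_abs_log_mul {q : ℝ} (hq0 : 0 < q) (hq1 : q < 1) (n : ℕ) :
    q ^ n = exp (-(|log q| * n)) := by
  rw [abs_of_neg (log_neg hq0 hq1), neg_mul, neg_neg, mul_comm, exp_nat_mul, exp_log hq0]

theorem tendsto_mul_sub_two_mul_sqrt_atTop {θ A : ℝ} (hθ : 0 < θ) (hA : 0 ≤ A) :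
    Tendsto (fun x : ℝ => θ * x - 2 * √(A * x)) atTop atTop := by
  refine tendsto_atTop_mono' atTop ?_ (tendsto_atTop_add_const_right atTop (-(A / (θ / 2)))
    (tendsto_id.const_mul_atTop (half_pos hθ)))
  filter_upwards [eventually_ge_atTop 0] with x hx
  have := two_mul_sqrt_mul_le_mul_add_div hx hA (half_pos hθ)
  rw [mul_comm x A] at this
  simp only [id]
  linarith

noncomputable def geomExpTerm (q lam x : ℝ) (i : ℕ) : ℝ :=
  (1 - q) * q ^ (i + 1) * exp (-lam * x / ((i : ℝ) + 1))

noncomputable def geomExpTail (q lam x : ℝ) : ℝ :=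
  ∑' i : ℕ, geomExpTerm q lam x i

theorem geomExpTerm_nonneg {q : ℝ} (hq0 : 0 < q) (hq1 : q < 1) (lam x : ℝ) (i : ℕ) :
    0 ≤ geomExpTerm q lam x i := by
  exact mul_nonneg (mul_nonneg (sub_nonneg.mpr hq1.le) (pow_nonneg hq0.le _)) (exp_pos _).le

theorem geomExpTerm_eq {q : ℝ} (hq0 : 0 < q) (hq1 : q < 1) (lam x : ℝ) (i : ℕ) :
    geomExpTerm q lam x i =
      (1 - q) * exp (-(|log q| * ((i : ℝ) + 1) + lam * x / ((i : ℝ) + 1))) := by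
  rw [geomExpTerm, pow_eq_exp_neg_abs_log_mul hq0 hq1, mul_assoc, ← exp_add]
  push_cast
  ring_nf

theorem summable_geomExpTerm {q lam x : ℝ} (hq0 : 0 < q) (hq1 : q < 1) (hlam : 0 ≤ lam)
    (hx : 0 ≤ x) : Summable (geomExpTerm q lam x) := by
  refine Summable.of_nonneg_of_le (geomExpTerm_nonneg hq0 hq1 lam x) (fun i => ?_)
    ((summable_geometric_of_lt_one hq0.le hq1).mul_left ((1 - q) * q))
  have : exp (-lam * x / ((i : ℝ) + 1)) ≤ 1 :=
    exp_le_one_iff.mpr (div_nonpos_of_nonpos_of_nonneg (by nlinarith) (by positivity))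
  calc geomExpTerm q lam x i ≤ (1 - q) * q ^ (i + 1) * 1 := by
        unfold geomExpTerm
        gcongr
    _ = (1 - q) * q * q ^ i := by ring

theorem mul_exp_neg_le_geomExpTail {q lam x : ℝ} (hq0 : 0 < q) (hq1 : q < 1) (hlam : 0 < lam)
    (hx : 0 < x) : (1 - q) * q * exp (-(2 * √(lam * |log q| * x))) ≤ geomExpTail q lam x := by
  have hb : 0 < |log q| := abs_pos.mpr (log_neg hq0 hq1).ne
  obtain ⟨i, hi⟩ := exists_nat_mul_succ_add_div_succ_le hb (mul_pos hlam hx)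
  refine le_trans ?_ ((summable_geomExpTerm hq0 hq1 hlam.le hx.le).le_tsum i
    (fun j _ => geomExpTerm_nonneg hq0 hq1 lam x j))
  rw [geomExpTerm_eq hq0 hq1, mul_assoc]
  refine mul_le_mul_of_nonneg_left ?_ (by linarith)
  calc q * exp (-(2 * √(lam * |log q| * x)))
      = exp (-(2 * √(|log q| * (lam * x)) + |log q|)) := by
        nth_rewrite 1 [← pow_one q]
        rw [pow_eq_exp_neg_abs_log_mul hq0 hq1, ← exp_add]
        ring_nf
    _ ≤ _ := exp_le_exp.mpr (by linarith)

theorem geomExpTerm_le {q lam x κ : ℝ} (hq0 : 0 < q) (hq1 : q < 1) (hlam : 0 ≤ lam)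
    (hx : 0 ≤ x) (hκ0 : 0 ≤ κ) (i : ℕ) :
    geomExpTerm q lam x i ≤
      (1 - q) * exp (-((1 - κ ^ 2) * |log q|)) ^ (i + 1) *
        exp (-(κ * (2 * √(lam * |log q| * x)))) := by
  have hamgm := two_mul_sqrt_mul_le_mul_add_div (mul_nonneg (sq_nonneg κ) (abs_nonneg (log q)))
    (mul_nonneg hlam hx) (by positivity : (0 : ℝ) < (i : ℝ) + 1)
  have hsqrt : √(κ ^ 2 * |log q| * (lam * x)) = κ * √(lam * |log q| * x) := by
    rw [mul_assoc, sqrt_mul (sq_nonneg κ), sqrt_sq hκ0]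
    ring_nf
  rw [geomExpTerm_eq hq0 hq1, mul_assoc (1 - q), ← exp_nat_mul, ← exp_add]
  refine mul_le_mul_of_nonneg_left (exp_le_exp.mpr ?_) (by linarith)
  rw [hsqrt] at hamgm
  push_cast
  nlinarith

theorem exists_geomExpTail_le {q lam κ : ℝ} (hq0 : 0 < q) (hq1 : q < 1) (hlam : 0 ≤ lam)
    (hκ0 : 0 ≤ κ) (hκ1 : κ < 1) :
    ∃ C, ∀ x, 0 ≤ x → geomExpTail q lam x ≤ C * exp (-(κ * (2 * √(lam * |log q| * x)))) := by
  set r := exp (-((1 - κ ^ 2) * |log q|))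
  have hr1 : r < 1 := exp_lt_one_iff.mpr (neg_lt_zero.mpr
    (mul_pos (by nlinarith) (abs_pos.mpr (log_neg hq0 hq1).ne)))
  have hgeom : HasSum (fun i : ℕ => (1 - q) * r ^ (i + 1)) ((1 - q) * r * (1 - r)⁻¹) := by
    simpa only [pow_succ', ← mul_assoc] using
      (hasSum_geometric_of_lt_one (r := r) (exp_pos _).le hr1).mul_left ((1 - q) * r)
  refine ⟨(1 - q) * r * (1 - r)⁻¹, fun x hx => ?_⟩
  rw [geomExpTail, ← hgeom.tsum_eq, ← tsum_mul_right]
  exact (summable_geomExpTerm hq0 hq1 hlam hx).tsum_le_tsum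
    (geomExpTerm_le hq0 hq1 hlam hx hκ0) (hgeom.summable.mul_right _)

theorem tendsto_div_neg_of_bounds {f s : ℝ → ℝ} (hs : Tendsto s atTop atTop)
    (hlower : ∃ c, ∀ᶠ x in atTop, c - s x ≤ f x)
    (hupper : ∀ κ ∈ Set.Ico (0 : ℝ) 1, ∃ C, ∀ᶠ x in atTop, f x ≤ C - κ * s x) :
    Tendsto (fun x => f x / -s x) atTop (𝓝 1) := by
  have hlim (κ C : ℝ) : Tendsto (fun x => κ - C / s x) atTop (𝓝 κ) := by
    simpa using tendsto_const_nhds.sub (hs.const_div_atTop C)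
  refine tendsto_order.2 ⟨fun a ha => ?_, fun a ha => ?_⟩
  · obtain ⟨κ, hκa, hκ1⟩ := exists_between (max_lt ha one_pos)
    obtain ⟨C, hC⟩ := hupper κ ⟨(le_max_right a 0).trans hκa.le, hκ1⟩
    filter_upwards [hC, hs.eventually_gt_atTop 0,
      (hlim κ C).eventually (lt_mem_nhds ((le_max_left a 0).trans_lt hκa))] with x hfx hsx hax
    have := mul_lt_mul_of_pos_right hax hsx
    rw [sub_mul, div_mul_cancel₀ _ hsx.ne'] at this
    rw [div_neg, lt_neg, div_lt_iff₀ hsx]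
    linarith
  · obtain ⟨c, hc⟩ := hlower
    filter_upwards [hc, hs.eventually_gt_atTop 0,
      (hlim 1 c).eventually (gt_mem_nhds ha)] with x hfx hsx hax
    have := mul_lt_mul_of_pos_right hax hsx
    rw [sub_mul, div_mul_cancel₀ _ hsx.ne'] at this
    rw [div_neg, neg_lt, lt_div_iff₀ hsx]
    linarith

theorem tendsto_log_div_neg_of_exp_bounds {F s : ℝ → ℝ} (hs : Tendsto s atTop atTop)
    (hlower : ∃ c > 0, ∀ᶠ x in atTop, c * exp (-s x) ≤ F x)
    (hupper : ∀ κ ∈ Set.Ico (0 : ℝ) 1, ∃ C, ∀ᶠ x in atTop, F x ≤ C * exp (-(κ * s x))) :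
    Tendsto (fun x => log (F x) / -s x) atTop (𝓝 1) := by
  obtain ⟨c, hc, hcF⟩ := hlower
  have hFpos : ∀ᶠ x in atTop, 0 < F x :=
    hcF.mono fun x hx => (mul_pos hc (exp_pos _)).trans_le hx
  refine tendsto_div_neg_of_bounds hs ⟨log c, hcF.mono fun x hx => ?_⟩ fun κ hκ => ?_
  · have := log_le_log (mul_pos hc (exp_pos _)) hx
    rwa [log_mul hc.ne' (exp_pos _).ne', log_exp, ← sub_eq_add_neg] at this
  · obtain ⟨C, hC⟩ := hupper κ hκ
    refine ⟨log C, ?_⟩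
    filter_upwards [hC, hFpos] with x hx hFx
    have hC0 : 0 < C := pos_of_mul_pos_left (hFx.trans_le hx) (exp_pos _).le
    have := log_le_log hFx hx
    rwa [log_mul hC0.ne' (exp_pos _).ne', log_exp, ← sub_eq_add_neg] at this

/-- Geometric scaling is heavy-tailed: the tail of the exponential mixture with
geometric scaling beats every exponential, and its logarithm is asymptotically
`-2√(λ|log q| x)`. -/
theorem stmt17 (q lam : ℝ) (hq0 : 0 < q) (hq1 : q < 1) (hlam : 0 < lam)
    (p : ℝ) (hp : p = 1 - q)
    (Fbar : ℝ → ℝ)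
    (hFbar : ∀ x : ℝ, Fbar x =
      ∑' i : ℕ, p * q ^ (i + 1) * Real.exp (-lam * x / ((i : ℝ) + 1))) :
    (∀ θ : ℝ, 0 < θ →
      Filter.Tendsto (fun x : ℝ => Real.exp (θ * x) * Fbar x) atTop atTop) ∧
    Filter.Tendsto
      (fun x : ℝ => Real.log (Fbar x) / (-2 * Real.sqrt (lam * |Real.log q| * x)))
      atTop (nhds 1) := by
  subst hp
  obtain rfl : Fbar = geomExpTail q lam := funext hFbar
  have hc : 0 < (1 - q) * q := mul_pos (by linarith) hq0
  have hA : 0 < lam * |log q| := mul_pos hlam (abs_pos.mpr (log_neg hq0 hq1).ne)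
  have hlower : ∀ᶠ x in atTop,
      (1 - q) * q * exp (-(2 * √(lam * |log q| * x))) ≤ geomExpTail q lam x :=
    (eventually_gt_atTop 0).mono fun x hx => mul_exp_neg_le_geomExpTail hq0 hq1 hlam hx
  refine ⟨fun θ hθ => ?_, ?_⟩
  · refine tendsto_atTop_mono' atTop (hlower.mono fun x hx => ?_)
      ((tendsto_exp_atTop.comp (tendsto_mul_sub_two_mul_sqrt_atTop hθ hA.le)).const_mul_atTop hc)
    calc (1 - q) * q * exp (θ * x - 2 * √(lam * |log q| * x))
        = exp (θ * x) * ((1 - q) * q * exp (-(2 * √(lam * |log q| * x)))) := by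
          rw [sub_eq_add_neg (θ * x), exp_add]; ring
      _ ≤ exp (θ * x) * geomExpTail q lam x := mul_le_mul_of_nonneg_left hx (exp_pos _).le
  · simp only [neg_mul]
    refine tendsto_log_div_neg_of_exp_bounds
      ((tendsto_sqrt_atTop.comp (tendsto_id.const_mul_atTop hA)).const_mul_atTop two_pos)
      ⟨_, hc, hlower⟩ fun κ hκ => ?_
    obtain ⟨C, hC⟩ := exists_geomExpTail_le hq0 hq1 hlam.le hκ.1 hκ.2
    exact ⟨C, (eventually_ge_atTop 0).mono hC⟩
end
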